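/- arXiv:2510.17041 — 5 statements merged into one kernel-verified Lean document; each statement's English description precedes it below -/
import Mathlib

section
/- Let λ > 1 be a Salem number of degree 4 with conjugates λ⁻¹, e^{iθ}, e^{-iθ} (θ ∈ (0,π)), and minimal polynomial x⁴ + a·x³ + b·x² + a·x + 1. Set τ = λ·e^{iθ} + λ⁻¹·e^{-iθ}. Then τ satisfies τ² - (b-2)·τ + (a² - 2b) = 0, τ is not real, and the discriminant (b-2)² - 4(a² - 2b) of this quadratic equals (b+2)² - 4a² and is negative. In particular τ is an imaginary quadratic algebraic integer. -/
open Complex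

/-!
`τ` and its complex conjugate are the two roots of `X² - 2 Re τ · X + |τ|²`. With
`s = λ + λ⁻¹` and `c = cos θ` one computes `2 Re τ = 2sc = b - 2` and
`|τ|² = s²c² + (s² - 4)(1 - c²) = s² + 4c² - 4 = a² - 2b`, so this real quadratic is
`X² - (b - 2)X + (a² - 2b)`. Its discriminant is `(2 Re τ)² - 4|τ|² = -4 (Im τ)²`, which is negative
because `Im τ = (λ - λ⁻¹) sin θ > 0`.
-/

namespace Complex

theorem sq_sub_two_re_mul_add_normSq (z : ℂ) : z ^ 2 - 2 * z.re * z + normSq z = 0 := by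
  rw [← mul_conj, re_eq_add_conj]
  ring

theorem two_re_sq_sub_four_normSq (z : ℂ) : (2 * z.re) ^ 2 - 4 * normSq z = -4 * z.im ^ 2 := by
  rw [normSq_apply]
  ring

end Complex

section SalemTau

variable (lam θ : ℝ)

noncomputable def salemTau : ℂ :=
  (lam : ℂ) * exp (θ * I) + ((lam⁻¹ : ℝ) : ℂ) * exp (-(θ * I))

theorem salemTau_re : (salemTau lam θ).re = (lam + lam⁻¹) * Real.cos θ := by
  rw [salemTau, ← neg_mul, ← ofReal_neg, add_re, re_ofReal_mul, re_ofReal_mul,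
    exp_ofReal_mul_I_re, exp_ofReal_mul_I_re, Real.cos_neg]
  ring

theorem salemTau_im : (salemTau lam θ).im = (lam - lam⁻¹) * Real.sin θ := by
  rw [salemTau, ← neg_mul, ← ofReal_neg, add_im, im_ofReal_mul, im_ofReal_mul,
    exp_ofReal_mul_I_im, exp_ofReal_mul_I_im, Real.sin_neg]
  ring

theorem normSq_salemTau {lam : ℝ} (hlam : lam ≠ 0) :
    normSq (salemTau lam θ) = (lam + lam⁻¹) ^ 2 + 4 * Real.cos θ ^ 2 - 4 := by
  have hinv : lam * lam⁻¹ = 1 := mul_inv_cancel₀ hlam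
  rw [normSq_apply, salemTau_re, salemTau_im]
  linear_combination (lam - lam⁻¹) ^ 2 * Real.sin_sq_add_cos_sq θ +
    4 * (Real.cos θ ^ 2 - 1) * hinv

theorem salemTau_im_pos {lam θ : ℝ} (hlam : 1 < lam) (hθ : θ ∈ Set.Ioo 0 Real.pi) :
    0 < (salemTau lam θ).im := by
  rw [salemTau_im]
  have hinv : lam⁻¹ < lam := (inv_lt_one_of_one_lt₀ hlam).trans hlam
  exact mul_pos (sub_pos.mpr hinv) (Real.sin_pos_of_pos_of_lt_pi hθ.1 hθ.2)

end SalemTau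

/-- Let `λ > 1` be a Salem number of degree 4 with conjugates
`λ⁻¹, e^{±iθ}` (`θ ∈ (0,π)`) and minimal polynomial `x⁴ + ax³ + bx² + ax + 1`,
so that `a = -(λ + λ⁻¹ + 2cos θ)` and `b = 2 + (λ + λ⁻¹)·2cos θ`.
Let `τ = λ·e^{iθ} + λ⁻¹·e^{-iθ}`. Then `τ² - (b-2)τ + (a² - 2b) = 0`, `τ` is not
real, and the discriminant `(b-2)² - 4(a² - 2b)` equals `(b+2)² - 4a²` and is
negative; in particular `τ` is an imaginary quadratic algebraic integer. -/
theorem stmt_4 (lam θ : ℝ) (a b : ℤ)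
    (hlam : 1 < lam) (hθ : θ ∈ Set.Ioo 0 Real.pi)
    (ha : (a : ℝ) = -(lam + lam⁻¹ + 2 * Real.cos θ))
    (hb : (b : ℝ) = 2 + (lam + lam⁻¹) * (2 * Real.cos θ))
    (τ : ℂ)
    (hτ : τ = (lam : ℂ) * Complex.exp (θ * Complex.I) +
        ((lam⁻¹ : ℝ) : ℂ) * Complex.exp (-(θ * Complex.I))) :
    τ ^ 2 - ((b : ℂ) - 2) * τ + ((a : ℂ) ^ 2 - 2 * b) = 0 ∧
    τ.im ≠ 0 ∧
    ((b : ℤ) - 2) ^ 2 - 4 * (a ^ 2 - 2 * b) = (b + 2) ^ 2 - 4 * a ^ 2 ∧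
    (b + 2) ^ 2 - 4 * a ^ 2 < 0 := by
  replace hτ : τ = salemTau lam θ := hτ
  have hre : (b : ℝ) - 2 = 2 * τ.re := by
    rw [hτ, salemTau_re, hb]
    ring
  have hnormSq : (a : ℝ) ^ 2 - 2 * b = normSq τ := by
    rw [hτ, normSq_salemTau θ (by linarith), ha, hb]
    ring
  have him : 0 < τ.im := hτ ▸ salemTau_im_pos hlam hθ
  refine ⟨?_, him.ne', by ring, ?_⟩
  · have hreC : (b : ℂ) - 2 = 2 * τ.re := by exact_mod_cast congrArg ofReal hre
    have hnormSqC : (a : ℂ) ^ 2 - 2 * b = normSq τ := by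
      exact_mod_cast congrArg ofReal hnormSq
    rw [hreC, hnormSqC]
    exact τ.sq_sub_two_re_mul_add_normSq
  · suffices ((b : ℝ) + 2) ^ 2 - 4 * (a : ℝ) ^ 2 < 0 by exact_mod_cast this
    calc ((b : ℝ) + 2) ^ 2 - 4 * (a : ℝ) ^ 2
        = ((b : ℝ) - 2) ^ 2 - 4 * ((a : ℝ) ^ 2 - 2 * b) := by ring
      _ = -4 * τ.im ^ 2 := by rw [hre, hnormSq, τ.two_re_sq_sub_four_normSq]
      _ < 0 := by nlinarith
end

section
/- Let ℓ > 0 and θ ∈ (0,π) be such that e^ℓ is a Salem number of degree 4 with complex conjugates e^{±iθ}. Then the minimal polynomial of β = e^{ℓ + iθ} over ℚ is r(x) = x⁴ - (4·cosh ℓ · cos θ)·x³ + (2 + 4·cosh²ℓ - 4·sin²θ)·x² - (4·cosh ℓ · cos θ)·x + 1; in particular β has degree 4 over ℚ. -/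
/-! With `x = e^ℓ`, `y = e^{iθ}`, `s = x + x⁻¹` and `t = y + y⁻¹`, the Salem hypothesis makes
`s + t` and `s t` rational. The polynomial with roots `β = x y`, `β⁻¹`, `β̄ = x y⁻¹`, `β̄⁻¹` is
`X⁴ - s t X³ + (s² + t² - 2) X² - s t X + 1`, hence rational. Its roots are not real, so it has no
rational factor of degree 1 or 3; a rational quadratic factor vanishing at `β` would be
`(X - β)(X - β̄)`, making `|β|² = e^{2ℓ}` rational, although `e^ℓ` has degree 4. -/

open Polynomial ComplexConjugate

section ReciprocalQuartic

variable {R S : Type*} [CommRing R] [CommRing S]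

noncomputable def reciprocalQuartic (a b : R) : R[X] :=
  X ^ 4 - C a * X ^ 3 + C b * X ^ 2 - C a * X + 1

theorem monic_reciprocalQuartic [Nontrivial R] (a b : R) : (reciprocalQuartic a b).Monic := by
  unfold reciprocalQuartic; monicity!

theorem natDegree_reciprocalQuartic [Nontrivial R] (a b : R) :
    (reciprocalQuartic a b).natDegree = 4 := by
  unfold reciprocalQuartic; compute_degree!

theorem coeff_reciprocalQuartic_three (a b : R) : (reciprocalQuartic a b).coeff 3 = -a := by
  simp [reciprocalQuartic, coeff_X_pow, coeff_one]

theorem coeff_reciprocalQuartic_two (a b : R) : (reciprocalQuartic a b).coeff 2 = b := by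
  simp [reciprocalQuartic, coeff_X_pow, coeff_one]

theorem map_reciprocalQuartic (f : R →+* S) (a b : R) :
    (reciprocalQuartic a b).map f = reciprocalQuartic (f a) (f b) := by
  simp [reciprocalQuartic]

theorem quadratic_mul_quadratic_eq_reciprocalQuartic (a b : R) :
    (X ^ 2 - C a * X + 1) * (X ^ 2 - C b * X + 1) = reciprocalQuartic (a + b) (2 + a * b) := by
  simp only [reciprocalQuartic, C_add, C_mul, C_ofNat]; ring

theorem exists_map_eq_reciprocalQuartic_mul [Nontrivial R] {f : R →+* S} {p : R[X]} {s t : S}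
    (hp : p.map f = reciprocalQuartic (s + t) (2 + s * t)) :
    ∃ q : R[X], q.Monic ∧ q.map f = reciprocalQuartic (s * t) (s ^ 2 + t ^ 2 - 2) := by
  have h3 : f (p.coeff 3) = -(s + t) := by rw [← coeff_map, hp, coeff_reciprocalQuartic_three]
  have h2 : f (p.coeff 2) = 2 + s * t := by rw [← coeff_map, hp, coeff_reciprocalQuartic_two]
  refine ⟨reciprocalQuartic (p.coeff 2 - 2) (p.coeff 3 ^ 2 - 2 * p.coeff 2 + 2),
    monic_reciprocalQuartic _ _, ?_⟩
  rw [map_reciprocalQuartic]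
  congr 1 <;> simp only [map_add, map_sub, map_mul, map_pow, map_ofNat, h2, h3] <;> ring

end ReciprocalQuartic

section Field

variable {K : Type*} [Field K]

theorem X_sub_C_mul_X_sub_C_inv {x : K} (hx : x ≠ 0) :
    (X - C x) * (X - C x⁻¹) = X ^ 2 - C (x + x⁻¹) * X + 1 := by
  have : C x * C x⁻¹ = (1 : K[X]) := by rw [← C_mul, mul_inv_cancel₀ hx, C_1]
  simp only [C_add]; linear_combination this

theorem prod_X_sub_C_eq_reciprocalQuartic {x y : K} (hx : x ≠ 0) (hy : y ≠ 0) :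
    (X - C x) * (X - C x⁻¹) * (X - C y) * (X - C y⁻¹) =
      reciprocalQuartic (x + x⁻¹ + (y + y⁻¹)) (2 + (x + x⁻¹) * (y + y⁻¹)) := by
  rw [mul_assoc _ (X - C y), X_sub_C_mul_X_sub_C_inv hx, X_sub_C_mul_X_sub_C_inv hy,
    quadratic_mul_quadratic_eq_reciprocalQuartic]

theorem prod_X_sub_C_mul_eq_reciprocalQuartic {x y : K} (hx : x ≠ 0) (hy : y ≠ 0) :
    (X - C (x * y)) * (X - C (x * y)⁻¹) * (X - C (x * y⁻¹)) * (X - C (x * y⁻¹)⁻¹) =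
      reciprocalQuartic ((x + x⁻¹) * (y + y⁻¹)) ((x + x⁻¹) ^ 2 + (y + y⁻¹) ^ 2 - 2) := by
  rw [prod_X_sub_C_eq_reciprocalQuartic (by positivity) (by positivity)]
  congr 1 <;> field_simp <;> ring

theorem natDegree_ne_one_of_dvd_of_forall_not_isRoot {p q : K[X]} (hq : ∀ r, ¬ q.IsRoot r)
    (hpq : p ∣ q) : p.natDegree ≠ 1 := fun h => by
  obtain ⟨r, hr⟩ :=
    exists_root_of_degree_eq_one ((degree_eq_iff_natDegree_eq_of_pos one_pos).mpr h)
  exact hq r (hr.dvd hpq)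

theorem sq_ne_algebraMap_of_two_lt_natDegree_minpoly {F : Type*} [Field F] [Algebra F K] {a : K}
    (ha : 2 < (minpoly F a).natDegree) (r : F) : a ^ 2 ≠ algebraMap F K r := by
  intro h
  have hne : (X ^ 2 - C r : F[X]) ≠ 0 := (monic_X_pow_sub_C r two_ne_zero).ne_zero
  have hle := natDegree_le_natDegree (minpoly.degree_le_of_ne_zero F a hne (by simp [h]))
  rw [natDegree_X_pow_sub_C] at hle
  omega

end Field

namespace Complex

theorem ratCast_ne_of_im_ne_zero {w : ℂ} (hw : w.im ≠ 0) (r : ℚ) : (r : ℂ) ≠ w :=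
  fun h => hw (by rw [← h, ratCast_im])

theorem im_inv_ne_zero {z : ℂ} (hz : z.im ≠ 0) : z⁻¹.im ≠ 0 := by
  have : normSq z ≠ 0 := normSq_eq_zero.not.mpr fun h => hz (by simp [h])
  rw [inv_im]; exact div_ne_zero (neg_ne_zero.mpr hz) this

theorem coeff_zero_eq_normSq_of_natDegree_eq_two {p : ℚ[X]} (hp : p.Monic)
    (h2 : p.natDegree = 2) {z : ℂ} (hz : aeval z p = 0) (him : z.im ≠ 0) :
    (p.coeff 0 : ℝ) = normSq z := by
  rw [hp.as_sum, h2] at hz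
  simp only [Finset.sum_range_succ, Finset.sum_range_zero, zero_add, pow_zero, pow_one, mul_one,
    map_add, map_pow, map_mul, aeval_X, aeval_C, eq_ratCast] at hz
  have hre := congrArg re hz
  have him' := congrArg im hz
  simp only [sq, add_re, mul_re, add_im, mul_im, ratCast_re, ratCast_im, zero_re, zero_im,
    zero_mul, sub_zero, add_zero] at hre him'
  have hc1 : (p.coeff 1 : ℝ) = -2 * z.re :=
    mul_right_cancel₀ him (by linear_combination him')
  rw [normSq_apply]
  linear_combination hre - z.re * hc1

end Complex

open Complex in
theorem minpoly_eq_of_map_eq_prod_X_sub_C_inv_conj {q : ℚ[X]} (hq : q.Monic) {z : ℂ}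
    (hz : z.im ≠ 0) (hnorm : ∀ r : ℚ, (r : ℝ) ≠ normSq z)
    (hqz : q.map (algebraMap ℚ ℂ) =
      (X - C z) * (X - C z⁻¹) * (X - C (conj z)) * (X - C (conj z)⁻¹)) :
    minpoly ℚ z = q := by
  have hq4 : q.natDegree = 4 := by
    rw [← natDegree_map_eq_of_injective (algebraMap ℚ ℂ).injective, hqz]; compute_degree!
  have hqroot : aeval z q = 0 := by rw [aeval_def, ← eval_map, hqz]; simp
  have hint : IsIntegral ℚ z := ⟨q, hq, hqroot⟩
  have hnoroot : ∀ r : ℚ, ¬ q.IsRoot r := fun r hr => by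
    have : (q.map (algebraMap ℚ ℂ)).eval (r : ℂ) = 0 := by
      rw [eval_map, ← eq_ratCast (algebraMap ℚ ℂ), eval₂_at_apply, hr.eq_zero, map_zero]
    have hconj : (conj z).im ≠ 0 := by rwa [conj_im, neg_ne_zero]
    simp only [hqz, eval_mul, eval_sub, eval_X, eval_C, mul_eq_zero, sub_eq_zero] at this
    rcases this with ((h | h) | h) | h
    exacts [ratCast_ne_of_im_ne_zero hz r h, ratCast_ne_of_im_ne_zero (im_inv_ne_zero hz) r h,
      ratCast_ne_of_im_ne_zero hconj r h, ratCast_ne_of_im_ne_zero (im_inv_ne_zero hconj) r h]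
  obtain ⟨c, hc⟩ := minpoly.dvd ℚ z hqroot
  have hc0 : c ≠ 0 := by rintro rfl; exact hq.ne_zero (by simpa using hc)
  have hdeg : (minpoly ℚ z).natDegree + c.natDegree = 4 := by
    rw [← natDegree_mul (minpoly.ne_zero hint) hc0, ← hc, hq4]
  have h1 := natDegree_ne_one_of_dvd_of_forall_not_isRoot hnoroot ⟨c, hc⟩
  have h3 := natDegree_ne_one_of_dvd_of_forall_not_isRoot hnoroot (Dvd.intro_left _ hc.symm)
  have h2 : (minpoly ℚ z).natDegree ≠ 2 := fun h2 => hnorm _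
    (coeff_zero_eq_normSq_of_natDegree_eq_two (minpoly.monic hint) h2 (minpoly.aeval ℚ z) hz)
  have hpos := minpoly.natDegree_pos hint
  exact (eq_of_monic_of_dvd_of_natDegree_le (minpoly.monic hint) hq ⟨c, hc⟩ (by omega)).symm

section ExpCoshCos

variable (ℓ θ : ℝ)

theorem ofReal_exp_add_inv : ((Real.exp ℓ : ℝ) : ℂ) + ((Real.exp ℓ : ℝ) : ℂ)⁻¹ =
    ((2 * Real.cosh ℓ : ℝ) : ℂ) := by
  rw [Complex.ofReal_exp, ← Complex.exp_neg]; push_cast; rw [Complex.two_cosh]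

theorem exp_mul_I_add_inv : Complex.exp (θ * Complex.I) + (Complex.exp (θ * Complex.I))⁻¹ =
    ((2 * Real.cos θ : ℝ) : ℂ) := by
  rw [← Complex.exp_neg]; push_cast; rw [Complex.two_cos, neg_mul]

theorem prod_X_sub_C_exp_eq_reciprocalQuartic :
    (X - C ((Real.exp ℓ : ℝ) : ℂ)) * (X - C ((Real.exp (-ℓ) : ℝ) : ℂ)) *
        (X - C (Complex.exp (θ * Complex.I))) * (X - C (Complex.exp (-(θ * Complex.I)))) =
      reciprocalQuartic (((2 * Real.cosh ℓ : ℝ) : ℂ) + ((2 * Real.cos θ : ℝ) : ℂ))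
        (2 + ((2 * Real.cosh ℓ : ℝ) : ℂ) * ((2 * Real.cos θ : ℝ) : ℂ)) := by
  rw [← ofReal_exp_add_inv, ← exp_mul_I_add_inv, ← prod_X_sub_C_eq_reciprocalQuartic
    (by simp) (Complex.exp_ne_zero _), Real.exp_neg, Complex.ofReal_inv, Complex.exp_neg]

theorem prod_X_sub_C_exp_add_mul_I_eq_reciprocalQuartic {β : ℂ}
    (hβ : β = Complex.exp (ℓ + θ * Complex.I)) :
    (X - C β) * (X - C β⁻¹) * (X - C (conj β)) * (X - C (conj β)⁻¹) =
      reciprocalQuartic (((2 * Real.cosh ℓ : ℝ) : ℂ) * ((2 * Real.cos θ : ℝ) : ℂ))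
        (((2 * Real.cosh ℓ : ℝ) : ℂ) ^ 2 + ((2 * Real.cos θ : ℝ) : ℂ) ^ 2 - 2) := by
  replace hβ : β = ((Real.exp ℓ : ℝ) : ℂ) * Complex.exp (θ * Complex.I) := by
    rw [hβ, Complex.exp_add, Complex.ofReal_exp]
  have hβconj : conj β = ((Real.exp ℓ : ℝ) : ℂ) * (Complex.exp (θ * Complex.I))⁻¹ := by
    rw [hβ, map_mul, Complex.conj_ofReal, ← Complex.exp_conj, ← Complex.exp_neg]
    simp
  rw [hβconj, hβ, prod_X_sub_C_mul_eq_reciprocalQuartic (by simp) (Complex.exp_ne_zero _),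
    ofReal_exp_add_inv, exp_mul_I_add_inv]

end ExpCoshCos

theorem stmt_5_general (ℓ θ : ℝ) (hθ : θ ∈ Set.Ioo 0 Real.pi)
    (hSalem : (minpoly ℚ (Real.exp ℓ)).map (algebraMap ℚ ℂ) =
      (X - C ((Real.exp ℓ : ℝ) : ℂ)) * (X - C ((Real.exp (-ℓ) : ℝ) : ℂ)) *
        (X - C (Complex.exp (θ * Complex.I))) *
        (X - C (Complex.exp (-(θ * Complex.I)))))
    (β : ℂ) (hβ : β = Complex.exp ((ℓ : ℂ) + θ * Complex.I)) :
    (minpoly ℚ β).map (algebraMap ℚ ℂ) =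
      X ^ 4 - C ((4 * Real.cosh ℓ * Real.cos θ : ℝ) : ℂ) * X ^ 3 +
        C ((2 + 4 * Real.cosh ℓ ^ 2 - 4 * Real.sin θ ^ 2 : ℝ) : ℂ) * X ^ 2 -
        C ((4 * Real.cosh ℓ * Real.cos θ : ℝ) : ℂ) * X + 1 ∧
    (minpoly ℚ β).natDegree = 4 := by
  rw [prod_X_sub_C_exp_eq_reciprocalQuartic] at hSalem
  obtain ⟨q, hq, hqmap⟩ := exists_map_eq_reciprocalQuartic_mul hSalem
  have hdeg : 2 < (minpoly ℚ (Real.exp ℓ)).natDegree := by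
    rw [← natDegree_map_eq_of_injective (algebraMap ℚ ℂ).injective, hSalem,
      natDegree_reciprocalQuartic]
    norm_num
  have hβim : β.im ≠ 0 := by
    have hsin := Real.sin_pos_of_pos_of_lt_pi hθ.1 hθ.2
    have : β.im = Real.exp ℓ * Real.sin θ := by rw [hβ, Complex.exp_im]; simp
    rw [this]; positivity
  have hβnorm : Complex.normSq β = Real.exp ℓ ^ 2 := by
    rw [hβ, Complex.normSq_eq_norm_sq, Complex.norm_exp]; simp
  have hmin : minpoly ℚ β = q := by
    refine minpoly_eq_of_map_eq_prod_X_sub_C_inv_conj hq hβim (fun r h => ?_) ?_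
    · exact sq_ne_algebraMap_of_two_lt_natDegree_minpoly hdeg r (by rw [eq_ratCast, h, hβnorm])
    · rw [hqmap, prod_X_sub_C_exp_add_mul_I_eq_reciprocalQuartic ℓ θ hβ]
  refine ⟨?_, ?_⟩
  · have ha : 2 * Real.cosh ℓ * (2 * Real.cos θ) = 4 * Real.cosh ℓ * Real.cos θ := by ring
    have hb : (2 * Real.cosh ℓ) ^ 2 + (2 * Real.cos θ) ^ 2 - 2 =
        2 + 4 * Real.cosh ℓ ^ 2 - 4 * Real.sin θ ^ 2 := by
      rw [Real.sin_sq]; ring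
    rw [hmin, hqmap, ← ha, ← hb]
    push_cast
    rfl
  · rw [hmin, ← natDegree_map_eq_of_injective (algebraMap ℚ ℂ).injective, hqmap,
      natDegree_reciprocalQuartic]

/-- Let `ℓ > 0`, `θ ∈ (0,π)` be such that `e^ℓ` is a Salem number
of degree 4 with conjugates `e^{-ℓ}, e^{±iθ}` (encoded by saying that the
minimal polynomial of `e^ℓ` over `ℚ` has precisely the roots
`e^ℓ, e^{-ℓ}, e^{iθ}, e^{-iθ}` in `ℂ`). Then the minimal polynomial over `ℚ` of
`β = e^{ℓ+iθ}` is
`x⁴ - (4cosh ℓ cos θ)x³ + (2 + 4cosh²ℓ - 4sin²θ)x² - (4cosh ℓ cos θ)x + 1`;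
in particular `β` has degree `4` over `ℚ`. -/
theorem stmt_5 (ℓ θ : ℝ) (hℓ : 0 < ℓ) (hθ : θ ∈ Set.Ioo 0 Real.pi)
    (hSalem : (minpoly ℚ (Real.exp ℓ)).map (algebraMap ℚ ℂ) =
      (X - C ((Real.exp ℓ : ℝ) : ℂ)) * (X - C ((Real.exp (-ℓ) : ℝ) : ℂ)) *
        (X - C (Complex.exp (θ * Complex.I))) *
        (X - C (Complex.exp (-(θ * Complex.I)))))
    (β : ℂ) (hβ : β = Complex.exp ((ℓ : ℂ) + θ * Complex.I)) :
    (minpoly ℚ β).map (algebraMap ℚ ℂ) =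
      X ^ 4 - C ((4 * Real.cosh ℓ * Real.cos θ : ℝ) : ℂ) * X ^ 3 +
        C ((2 + 4 * Real.cosh ℓ ^ 2 - 4 * Real.sin θ ^ 2 : ℝ) : ℂ) * X ^ 2 -
        C ((4 * Real.cosh ℓ * Real.cos θ : ℝ) : ℂ) * X + 1 ∧
    (minpoly ℚ β).natDegree = 4 :=
  stmt_5_general ℓ θ hθ hSalem β hβ
end

section
/- Let λ = e^ℓ (ℓ > 0) be a Salem number of degree 4 that is square-rootable over ℚ, with conjugates e^{±iθ}, minimal polynomial f, and suppose f(x²) = g(x)·g(-x) with g monic palindromic of degree 4, with even-degree coefficients in ℚ and odd-degree coefficients in √α·ℚ for some totally positive α ∈ ℚ. Then, after possibly interchanging g(x) and g(-x), the roots of g are e^{ℓ/2}, e^{-ℓ/2}, and either the pair e^{±iθ/2} or the pair -e^{±iθ/2}. -/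
open Polynomial

lemma vieta4' {K : Type*} [CommRing K] (p q r s : K) :
    (X - C p) * (X - C q) * (X - C r) * (X - C s) =
      X^4 - C (p+q+r+s) * X^3 + C (p*q + (p+q)*(r+s) + r*s) * X^2
        - C (p*q*(r+s) + r*s*(p+q)) * X + C (p*q*(r*s)) := by
  simp only [C_add, C_mul]; ring

lemma vieta2' {K : Type*} [CommRing K] (p q : K) :
    (X - C p) * (X - C q) = X^2 - C (p+q) * X + C (p*q) := by
  simp only [C_add, C_mul]; ring

lemma assembleC (q : Polynomial ℝ) (u v : ℝ) (p1 p2 z : ℂ)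
    (hq : q = (X^2 - C u * X + 1) * (X^2 - C v * X + 1))
    (hp : p1 * p2 = 1) (hs : p1 + p2 = (u:ℂ))
    (hz : z * z⁻¹ = 1) (hzs : z + z⁻¹ = (v:ℂ)) :
    q.map Complex.ofRealHom = (X - C p1) * (X - C p2) * (X - C z) * (X - C z⁻¹) := by
  rw [hq]
  simp only [Polynomial.map_add, Polynomial.map_sub, Polynomial.map_mul,
    Polynomial.map_pow, Polynomial.map_X, Polynomial.map_C, Polynomial.map_one,
    Complex.ofRealHom_eq_coe]
  rw [show (X - C p1)*(X - C p2)*(X - C z)*(X - C z⁻¹)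
      = ((X - C p1)*(X - C p2))*((X - C z)*(X - C z⁻¹)) by ring,
    vieta2', vieta2', hp, hs, hz, hzs, map_one]

/-- Let `λ = e^ℓ` (`ℓ > 0`) be a Salem number of degree 4 with
conjugates `e^{±iθ}` and minimal polynomial `f`, square-rootable over `ℚ` via a
monic palindromic `g` of degree 4 with rational even-degree coefficients and
odd-degree coefficients in `√α·ℚ` (`α ∈ ℚ` totally positive), so that
`f(x²) = g(x)·g(-x)`. Then, after possibly interchanging `g(x)` and `g(-x)`,
the roots of `g` are `e^{ℓ/2}`, `e^{-ℓ/2}`, and either the pair `±e^{iθ/2},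
e^{-iθ/2}` or the pair `-e^{iθ/2}, -e^{-iθ/2}`. -/
theorem stmt_6 (ℓ θ : ℝ) (hℓ : 0 < ℓ) (hθ : θ ∈ Set.Ioo 0 Real.pi)
    (f : Polynomial ℚ) (hf : f = minpoly ℚ (Real.exp ℓ))
    (hSalem : f.map (algebraMap ℚ ℂ) =
      (X - C ((Real.exp ℓ : ℝ) : ℂ)) * (X - C ((Real.exp (-ℓ) : ℝ) : ℂ)) *
        (X - C (Complex.exp (θ * Complex.I))) *
        (X - C (Complex.exp (-(θ * Complex.I)))))
    (g : Polynomial ℝ) (α : ℚ) (hα : 0 < α)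
    (hmonic : g.Monic) (hdeg : g.natDegree = 4)
    (hpalin : ∀ i ≤ 4, g.coeff i = g.coeff (4 - i))
    (heven : ∀ i, Even i → ∃ q : ℚ, g.coeff i = (q : ℝ))
    (hodd : ∀ i, Odd i → ∃ q : ℚ, g.coeff i = Real.sqrt α * q)
    (hfactor : (f.map (algebraMap ℚ ℝ)).comp (X ^ 2) = g * g.comp (-X)) :
    ∃ ζ : ℂ, (ζ = Complex.exp (θ / 2 * Complex.I) ∨
        ζ = -Complex.exp (θ / 2 * Complex.I)) ∧
      (g.map Complex.ofRealHom =
          (X - C ((Real.exp (ℓ / 2) : ℝ) : ℂ)) *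
            (X - C ((Real.exp (-(ℓ / 2)) : ℝ) : ℂ)) * (X - C ζ) * (X - C ζ⁻¹) ∨
        (g.comp (-X)).map Complex.ofRealHom =
          (X - C ((Real.exp (ℓ / 2) : ℝ) : ℂ)) *
            (X - C ((Real.exp (-(ℓ / 2)) : ℝ) : ℂ)) * (X - C ζ) * (X - C ζ⁻¹)) := by
  obtain ⟨a, ha'⟩ : ∃ a : ℝ, a = g.coeff 1 := ⟨_, rfl⟩
  obtain ⟨b, hb'⟩ : ∃ b : ℝ, b = g.coeff 2 := ⟨_, rfl⟩
  obtain ⟨u, hu'⟩ : ∃ u : ℝ, u = Real.exp (ℓ/2) + Real.exp (-(ℓ/2)) := ⟨_, rfl⟩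
  obtain ⟨v, hv'⟩ : ∃ v : ℝ, v = 2 * Real.cos (θ/2) := ⟨_, rfl⟩
  obtain ⟨s1, hs1'⟩ : ∃ s1 : ℝ, s1 = u^2 + v^2 - 4 := ⟨_, rfl⟩
  obtain ⟨s2, hs2'⟩ : ∃ s2 : ℝ, s2 = 2 + (u^2 - 2) * (v^2 - 2) := ⟨_, rfl⟩
  -- explicit form of g
  have hg : g = X^4 + C a * X^3 + C b * X^2 + C a * X + 1 := by
    have h4 : g.coeff 4 = 1 := by
      have := hmonic.coeff_natDegree; rwa [hdeg] at this
    have h0 : g.coeff 0 = 1 := by rw [hpalin 0 (by norm_num)]; simpa using h4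
    have h3 : g.coeff 3 = g.coeff 1 := by simpa using hpalin 3 (by norm_num)
    ext i
    rcases lt_or_ge i 5 with hi | hi
    · interval_cases i <;>
        simp [coeff_one, coeff_X_pow, h0, h3, h4, coeff_C_mul, ← ha', ← hb']
    · rw [g.coeff_eq_zero_of_natDegree_lt (by omega)]
      simp only [coeff_add, coeff_one, coeff_X_pow, coeff_C_mul, coeff_X]
      rw [if_neg (by omega), if_neg (by omega), if_neg (by omega), if_neg (by omega),
        if_neg (by omega)]; ring
  -- scalar facts
  have eℓ1 : Real.exp (ℓ/2) * Real.exp (ℓ/2) = Real.exp ℓ := by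
    rw [← Real.exp_add]; norm_num
  have eℓ2 : Real.exp (ℓ/2) * Real.exp (-(ℓ/2)) = 1 := by
    rw [← Real.exp_add]; norm_num
  have eℓ3 : Real.exp (-(ℓ/2)) * Real.exp (-(ℓ/2)) = Real.exp (-ℓ) := by
    rw [← Real.exp_add]; congr 1; ring
  have hsumR : Real.exp ℓ + Real.exp (-ℓ) = u^2 - 2 := by
    rw [hu']; linear_combination -eℓ1 - 2*eℓ2 - eℓ3
  have hsum1 : ((Real.exp ℓ : ℝ) : ℂ) + ((Real.exp (-ℓ) : ℝ) : ℂ) = (u:ℂ)^2 - 2 := by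
    rw [← Complex.ofReal_add, hsumR, Complex.ofReal_sub, Complex.ofReal_pow,
      Complex.ofReal_ofNat]
  have hprod1 : ((Real.exp ℓ : ℝ) : ℂ) * ((Real.exp (-ℓ) : ℝ) : ℂ) = 1 := by
    rw [← Complex.ofReal_mul, ← Real.exp_add]; norm_num
  have hpsum : ((Real.exp (ℓ/2) : ℝ) : ℂ) + ((Real.exp (-(ℓ/2)) : ℝ) : ℂ) = (u:ℂ) := by
    rw [← Complex.ofReal_add, hu']
  have hpprod : ((Real.exp (ℓ/2) : ℝ) : ℂ) * ((Real.exp (-(ℓ/2)) : ℝ) : ℂ) = 1 := by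
    rw [← Complex.ofReal_mul, eℓ2, Complex.ofReal_one]
  have twocos : ∀ x : ℂ, Complex.exp (x * Complex.I) + Complex.exp (-(x * Complex.I))
      = 2 * Complex.cos x := by
    intro x; rw [Complex.cos]; ring_nf
  have hcosθ : Real.cos θ = 2 * Real.cos (θ/2)^2 - 1 := by
    have := Real.cos_sq (θ/2); rw [show 2*(θ/2) = θ by ring] at this; linarith
  have hsum2 : Complex.exp (θ * Complex.I) + Complex.exp (-(θ * Complex.I)) = (v:ℂ)^2 - 2 := by
    rw [twocos ((θ:ℝ):ℂ), ← Complex.ofReal_cos, hcosθ, hv']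
    push_cast; ring
  have hprod2 : Complex.exp (θ * Complex.I) * Complex.exp (-(θ * Complex.I)) = 1 := by
    rw [← Complex.exp_add]; norm_num
  have hzv : Complex.exp (θ/2 * Complex.I) + Complex.exp (-(θ/2 * Complex.I)) = (v:ℂ) := by
    rw [show (θ:ℂ)/2 * Complex.I = ((θ/2 : ℝ):ℂ) * Complex.I by push_cast; ring,
      twocos, ← Complex.ofReal_cos, hv']
    push_cast; ring
  have hs1C : ((s1:ℝ):ℂ) = (u:ℂ)^2 + (v:ℂ)^2 - 4 := by rw [hs1']; push_cast; ring
  have hs2C : ((s2:ℝ):ℂ) = 2 + ((u:ℂ)^2 - 2) * ((v:ℂ)^2 - 2) := by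
    rw [hs2']; push_cast; ring
  -- the real form of f
  have hfR : f.map (algebraMap ℚ ℝ) = X^4 - C s1 * X^3 + C s2 * X^2 - C s1 * X + 1 := by
    apply Polynomial.map_injective Complex.ofRealHom Complex.ofReal_injective
    rw [Polynomial.map_map,
      show Complex.ofRealHom.comp (algebraMap ℚ ℝ) = algebraMap ℚ ℂ from
        RingHom.ext fun x => by simp [eq_ratCast],
      hSalem, vieta4']
    simp only [Polynomial.map_add, Polynomial.map_sub, Polynomial.map_mul,
      Polynomial.map_pow, Polynomial.map_X, Polynomial.map_C, Polynomial.map_one,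
      Complex.ofRealHom_eq_coe]
    rw [show ((Real.exp ℓ : ℝ) : ℂ) + ((Real.exp (-ℓ) : ℝ) : ℂ) + Complex.exp (θ * Complex.I)
        + Complex.exp (-(θ * Complex.I)) = ((s1:ℝ):ℂ) by
        rw [hs1C]; linear_combination hsum1 + hsum2]
    rw [show ((Real.exp ℓ : ℝ) : ℂ) * ((Real.exp (-ℓ) : ℝ) : ℂ)
        + (((Real.exp ℓ : ℝ) : ℂ) + ((Real.exp (-ℓ) : ℝ) : ℂ))
          * (Complex.exp (θ * Complex.I) + Complex.exp (-(θ * Complex.I)))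
        + Complex.exp (θ * Complex.I) * Complex.exp (-(θ * Complex.I)) = ((s2:ℝ):ℂ) by
        rw [hs2C]
        linear_combination hprod1 + hprod2
          + (Complex.exp (θ * Complex.I) + Complex.exp (-(θ * Complex.I))) * hsum1
          + ((u:ℂ)^2 - 2) * hsum2]
    rw [show ((Real.exp ℓ : ℝ) : ℂ) * ((Real.exp (-ℓ) : ℝ) : ℂ)
          * (Complex.exp (θ * Complex.I) + Complex.exp (-(θ * Complex.I)))
        + Complex.exp (θ * Complex.I) * Complex.exp (-(θ * Complex.I))
          * (((Real.exp ℓ : ℝ) : ℂ) + ((Real.exp (-ℓ) : ℝ) : ℂ)) = ((s1:ℝ):ℂ) by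
        rw [hs1C]
        linear_combination (Complex.exp (θ * Complex.I) + Complex.exp (-(θ * Complex.I))) * hprod1
          + (((Real.exp ℓ : ℝ) : ℂ) + ((Real.exp (-ℓ) : ℝ) : ℂ)) * hprod2
          + hsum1 + hsum2]
    rw [show ((Real.exp ℓ : ℝ) : ℂ) * ((Real.exp (-ℓ) : ℝ) : ℂ)
        * (Complex.exp (θ * Complex.I) * Complex.exp (-(θ * Complex.I))) = 1 by
        rw [hprod1, hprod2, one_mul], map_one]
  -- expand hfactor into coefficient equations
  have hcomp : (X^4 - C s1 * X^3 + C s2 * X^2 - C s1 * X + 1 : Polynomial ℝ).comp (X^2)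
      = X^8 - C s1 * X^6 + C s2 * X^4 - C s1 * X^2 + 1 := by
    simp only [add_comp, sub_comp, mul_comp, pow_comp, X_comp, C_comp, one_comp, ← pow_mul]
  have hgneg : (X^4 + C a * X^3 + C b * X^2 + C a * X + 1 : Polynomial ℝ).comp (-X)
      = X^4 - C a * X^3 + C b * X^2 - C a * X + 1 := by
    simp only [add_comp, mul_comp, pow_comp, X_comp, C_comp, one_comp]
    ring
  have hexpand : (X^4 + C a * X^3 + C b * X^2 + C a * X + 1 : Polynomial ℝ)
        * (X^4 - C a * X^3 + C b * X^2 - C a * X + 1)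
      = X^8 + C (2*b - a^2) * X^6 + C (b^2 + 2 - 2*a^2) * X^4 + C (2*b - a^2) * X^2 + 1 := by
    simp only [C_sub, C_add, C_mul, C_pow, map_ofNat]
    ring
  rw [hfR, hg, hcomp, hgneg, hexpand] at hfactor
  have e6 : -s1 = 2*b - a^2 := by
    have h := congrArg (fun p => coeff p 6) hfactor
    simp only [coeff_add, coeff_sub, coeff_C_mul, coeff_X_pow, coeff_one] at h
    norm_num at h
    linarith [h]
  have e4 : s2 = b^2 + 2 - 2*a^2 := by
    have h := congrArg (fun p => coeff p 4) hfactor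
    simp only [coeff_add, coeff_sub, coeff_C_mul, coeff_X_pow, coeff_one] at h
    norm_num at h
    linarith [h]
  rw [hs1'] at e6
  rw [hs2'] at e4
  have key : (a - (u+v)) * (a + (u+v)) * ((a - (u-v)) * (a + (u-v))) = 0 := by
    linear_combination (a^2 + 2*b - u^2 - v^2 + 4) * e6 + (-4) * e4
  -- assemble cases
  rcases mul_eq_zero.mp key with h | h
  · rcases mul_eq_zero.mp h with h | h
    · -- a = u + v : swap case, ζ = exp(iθ/2)
      have ha : a = u + v := by linarith [sub_eq_zero.mp h]
      have hb : b = u*v + 2 := by rw [ha] at e6; linear_combination -e6/2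
      refine ⟨Complex.exp (θ/2 * Complex.I), Or.inl rfl, Or.inr ?_⟩
      refine assembleC _ u v _ _ _ ?_ hpprod hpsum
        (mul_inv_cancel₀ (Complex.exp_ne_zero _)) ?_
      · rw [hg, ha, hb]
        simp only [add_comp, sub_comp, mul_comp, pow_comp, X_comp, C_comp, one_comp, ofNat_comp,
          C_add, C_sub, C_neg, C_mul, map_ofNat]
        ring
      · rw [← Complex.exp_neg]; exact hzv
    · -- a = -(u+v) : direct case, ζ = exp(iθ/2)
      have ha : a = -(u + v) := by linarith [h]
      have hb : b = u*v + 2 := by rw [ha] at e6; linear_combination -e6/2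
      refine ⟨Complex.exp (θ/2 * Complex.I), Or.inl rfl, Or.inl ?_⟩
      refine assembleC _ u v _ _ _ ?_ hpprod hpsum
        (mul_inv_cancel₀ (Complex.exp_ne_zero _)) ?_
      · rw [hg, ha, hb]
        simp only [C_add, C_mul, C_neg, map_ofNat]
        ring
      · rw [← Complex.exp_neg]; exact hzv
  · rcases mul_eq_zero.mp h with h | h
    · -- a = u - v : swap case, ζ = -exp(iθ/2)
      have ha : a = u - v := by linarith [sub_eq_zero.mp h]
      have hb : b = 2 - u*v := by rw [ha] at e6; linear_combination -e6/2
      refine ⟨-Complex.exp (θ/2 * Complex.I), Or.inr rfl, Or.inr ?_⟩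
      refine assembleC _ u (-v) _ _ _ ?_ hpprod hpsum ?_ ?_
      · rw [hg, ha, hb]
        simp only [add_comp, sub_comp, mul_comp, pow_comp, X_comp, C_comp, one_comp, ofNat_comp,
          C_add, C_sub, C_neg, C_mul, map_ofNat]
        ring
      · rw [inv_neg, ← Complex.exp_neg]
        simp [mul_comm, Complex.exp_ne_zero, neg_mul_neg, ← Complex.exp_add]
      · rw [inv_neg, ← Complex.exp_neg]
        push_cast
        linear_combination -hzv
    · -- a = -(u - v) : direct case, ζ = -exp(iθ/2)
      have ha : a = -(u - v) := by linarith [h]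
      have hb : b = 2 - u*v := by rw [ha] at e6; linear_combination -e6/2
      refine ⟨-Complex.exp (θ/2 * Complex.I), Or.inr rfl, Or.inl ?_⟩
      refine assembleC _ u (-v) _ _ _ ?_ hpprod hpsum ?_ ?_
      · rw [hg, ha, hb]
        simp only [C_add, C_sub, C_mul, C_neg, map_ofNat]
        ring
      · rw [inv_neg, ← Complex.exp_neg]
        simp [neg_mul_neg, ← Complex.exp_add]
      · rw [inv_neg, ← Complex.exp_neg]
        push_cast
        linear_combination -hzv
end

section
/- Let l, a be integers such that Δ = (2-l)² + 4a < 0. Then there exists a vector α in the order 𝒬 ⊂ C₄(ℚ) (the ℤ-span of products of i₁, i₂, ω = (1/2)(-1+i₁+i₂+i₃), i₄) satisfying α² - (2-l)·α - a = 0. (One takes α = (l-2+α₀)/2 where α₀ = p₁i₁+p₂i₂+p₃i₃+p₄i₄ with -Δ = p₁²+p₂²+p₃²+p₄², choosing the parities of the p_i according to the parity of l.) -/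
open CliffordAlgebra

/-- The quadratic form `-x₁² - x₂² - x₃² - x₄²` over `ℚ`; its Clifford algebra
is `C₄(ℚ)`, generated by anticommuting `i₁, …, i₄` with `i_j² = -1`. -/
noncomputable def Q4 : QuadraticForm ℚ (Fin 4 → ℚ) :=
  QuadraticMap.weightedSumSquares ℚ (fun _ : Fin 4 => (-1 : ℚ))

/-- The generators `i₁, i₂, i₃, i₄` of `C₄(ℚ)`. -/
noncomputable def gen (j : Fin 4) : CliffordAlgebra Q4 :=
  ι Q4 (Pi.single j 1)

/-- `ω = (1/2)(-1 + i₁ + i₂ + i₃)`. -/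
noncomputable def omegaC : CliffordAlgebra Q4 :=
  (2⁻¹ : ℚ) • (-1 + gen 0 + gen 1 + gen 2)

/-- `x₁ = i₁`, `x₂ = i₂`, `x₃ = ω`, `x₄ = i₄`. -/
noncomputable def xgen : Fin 4 → CliffordAlgebra Q4 :=
  ![gen 0, gen 1, omegaC, gen 3]

/-- The order `𝒬`: the `ℤ`-span of the ordered products `x_I`, `I ⊆ {1,2,3,4}`. -/
noncomputable def Qlat : Submodule ℤ (CliffordAlgebra Q4) :=
  Submodule.span ℤ
    {y | ∃ I : Finset (Fin 4), y = ((I.sort (· ≤ ·)).map xgen).prod}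


lemma sq_emod_four (x : ℤ) : x ^ 2 % 4 = (x % 2) ^ 2 := by
  obtain ⟨k, hk⟩ : ∃ k, x = 2 * k + x % 2 := ⟨x / 2, by omega⟩
  rcases Int.emod_two_eq_zero_or_one x with h | h <;> rw [h] <;>
    rw [h] at hk <;> subst hk
  · have : (2 * k + 0) ^ 2 = 0 + 4 * (k * k) := by ring
    rw [this, Int.add_mul_emod_self_left]; norm_num
  · have : (2 * k + 1) ^ 2 = 1 + 4 * (k * k + k) := by ring
    rw [this, Int.add_mul_emod_self_left]; norm_num

lemma four_sq_three_odd (n : ℤ) (hn : 0 < n) (h3 : n % 4 = 3) :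
    ∃ r₁ r₂ r₃ d : ℤ,
      (2*r₁+1)^2 + (2*r₂+1)^2 + (2*r₃+1)^2 + (2*d)^2 = n := by
  obtain ⟨p0, p1, p2, p3, hsum⟩ := Nat.sum_four_squares n.toNat
  have hsum' : (p0:ℤ)^2 + (p1:ℤ)^2 + (p2:ℤ)^2 + (p3:ℤ)^2 = n := by
    have := congrArg (Nat.cast : ℕ → ℤ) hsum
    push_cast at this
    rwa [Int.toNat_of_nonneg hn.le] at this
  have m0 := sq_emod_four (p0:ℤ); have m1 := sq_emod_four (p1:ℤ)
  have m2 := sq_emod_four (p2:ℤ); have m3 := sq_emod_four (p3:ℤ)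
  obtain ⟨y0, hy0⟩ : ∃ y, (p0:ℤ)^2 = y := ⟨_, rfl⟩
  obtain ⟨y1, hy1⟩ : ∃ y, (p1:ℤ)^2 = y := ⟨_, rfl⟩
  obtain ⟨y2, hy2⟩ : ∃ y, (p2:ℤ)^2 = y := ⟨_, rfl⟩
  obtain ⟨y3, hy3⟩ : ∃ y, (p3:ℤ)^2 = y := ⟨_, rfl⟩
  obtain ⟨e0, he0⟩ : ∃ e, (p0:ℤ) % 2 = e := ⟨_, rfl⟩
  obtain ⟨e1, he1⟩ : ∃ e, (p1:ℤ) % 2 = e := ⟨_, rfl⟩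
  obtain ⟨e2, he2⟩ : ∃ e, (p2:ℤ) % 2 = e := ⟨_, rfl⟩
  obtain ⟨e3, he3⟩ : ∃ e, (p3:ℤ) % 2 = e := ⟨_, rfl⟩
  have b0 : e0 = 0 ∨ e0 = 1 := by omega
  have b1 : e1 = 0 ∨ e1 = 1 := by omega
  have b2 : e2 = 0 ∨ e2 = 1 := by omega
  have b3 : e3 = 0 ∨ e3 = 1 := by omega
  have q0 : e0 ^ 2 = e0 := by rcases b0 with h|h <;> rw [h] <;> norm_num
  have q1 : e1 ^ 2 = e1 := by rcases b1 with h|h <;> rw [h] <;> norm_num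
  have q2 : e2 ^ 2 = e2 := by rcases b2 with h|h <;> rw [h] <;> norm_num
  have q3 : e3 ^ 2 = e3 := by rcases b3 with h|h <;> rw [h] <;> norm_num
  rw [hy0, he0, q0] at m0; rw [hy1, he1, q1] at m1
  rw [hy2, he2, q2] at m2; rw [hy3, he3, q3] at m3
  rw [hy0, hy1, hy2, hy3] at hsum'
  clear q0 q1 q2 q3 hsum
  have hsum3 : e0 + e1 + e2 + e3 = 3 := by clear he0 he1 he2 he3 hy0 hy1 hy2 hy3; omega
  have hcase : (e0 = 0 ∧ e1 = 1 ∧ e2 = 1 ∧ e3 = 1)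
      ∨ (e0 = 1 ∧ e1 = 0 ∧ e2 = 1 ∧ e3 = 1)
      ∨ (e0 = 1 ∧ e1 = 1 ∧ e2 = 0 ∧ e3 = 1)
      ∨ (e0 = 1 ∧ e1 = 1 ∧ e2 = 1 ∧ e3 = 0) := by
    clear he0 he1 he2 he3 hy0 hy1 hy2 hy3 m0 m1 m2 m3 hsum'; omega
  have odd_form : ∀ x : ℤ, x % 2 = 1 → ∃ r, x = 2*r+1 := fun x hx => ⟨x/2, by omega⟩
  have even_form : ∀ x : ℤ, x % 2 = 0 → ∃ d, x = 2*d := fun x hx => ⟨x/2, by omega⟩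
  rw [← hy0, ← hy1, ← hy2, ← hy3] at hsum'
  rcases hcase with ⟨h0,h1,h2,h3'⟩ | ⟨h0,h1,h2,h3'⟩ | ⟨h0,h1,h2,h3'⟩ | ⟨h0,h1,h2,h3'⟩
  · obtain ⟨d, hd⟩ := even_form _ (he0.trans h0)
    obtain ⟨a, ha⟩ := odd_form _ (he1.trans h1)
    obtain ⟨b, hb⟩ := odd_form _ (he2.trans h2)
    obtain ⟨c, hc⟩ := odd_form _ (he3.trans h3')
    rw [hd, ha, hb, hc] at hsum'
    exact ⟨a, b, c, d, by linear_combination hsum'⟩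
  · obtain ⟨d, hd⟩ := even_form _ (he1.trans h1)
    obtain ⟨a, ha⟩ := odd_form _ (he0.trans h0)
    obtain ⟨b, hb⟩ := odd_form _ (he2.trans h2)
    obtain ⟨c, hc⟩ := odd_form _ (he3.trans h3')
    rw [hd, ha, hb, hc] at hsum'
    exact ⟨a, b, c, d, by linear_combination hsum'⟩
  · obtain ⟨d, hd⟩ := even_form _ (he2.trans h2)
    obtain ⟨a, ha⟩ := odd_form _ (he0.trans h0)
    obtain ⟨b, hb⟩ := odd_form _ (he1.trans h1)
    obtain ⟨c, hc⟩ := odd_form _ (he3.trans h3')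
    rw [hd, ha, hb, hc] at hsum'
    exact ⟨a, b, c, d, by linear_combination hsum'⟩
  · obtain ⟨d, hd⟩ := even_form _ (he3.trans h3')
    obtain ⟨a, ha⟩ := odd_form _ (he0.trans h0)
    obtain ⟨b, hb⟩ := odd_form _ (he1.trans h1)
    obtain ⟨c, hc⟩ := odd_form _ (he2.trans h2)
    rw [hd, ha, hb, hc] at hsum'
    exact ⟨a, b, c, d, by linear_combination hsum'⟩

lemma quad (c : ℚ) (w : Fin 4 → ℚ) :
    (algebraMap ℚ (CliffordAlgebra Q4) c + ι Q4 w) * (algebraMap ℚ _ c + ι Q4 w)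
      - algebraMap ℚ (CliffordAlgebra Q4) (2*c) * (algebraMap ℚ _ c + ι Q4 w)
      - algebraMap ℚ (CliffordAlgebra Q4) (Q4 w - c^2) = 0 := by
  have hv := ι_sq_scalar Q4 w
  have hc : (algebraMap ℚ (CliffordAlgebra Q4)) c * ι Q4 w = ι Q4 w * algebraMap ℚ _ c :=
    Algebra.commutes c _
  simp only [map_sub, map_mul, map_pow, map_ofNat, pow_two]
  noncomm_ring
  rw [hv, hc]
  abel

lemma iota_decomp (w : Fin 4 → ℚ) :
    ι Q4 w = w 0 • gen 0 + w 1 • gen 1 + w 2 • gen 2 + w 3 • gen 3 := by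
  have : w = w 0 • (Pi.single 0 1 : Fin 4 → ℚ) + w 1 • (Pi.single 1 1 : Fin 4 → ℚ)
      + w 2 • (Pi.single 2 1 : Fin 4 → ℚ) + w 3 • (Pi.single 3 1 : Fin 4 → ℚ) := by
    funext j; fin_cases j <;> simp
  rw [this]
  simp [gen, map_add, map_smul]

lemma Q4_apply (w : Fin 4 → ℚ) :
    Q4 w = -(w 0 * w 0) - w 1 * w 1 - w 2 * w 2 - w 3 * w 3 := by
  simp [Q4, QuadraticMap.weightedSumSquares_apply, Fin.sum_univ_four]
  ring

lemma alpha_form (s t₀ t₁ u t₃ : ℤ) :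
    (s • (1:CliffordAlgebra Q4) + t₀ • gen 0 + t₁ • gen 1 + u • omegaC + t₃ • gen 3)
      = algebraMap ℚ _ ((s:ℚ) - u/2)
        + ι Q4 ![(t₀:ℚ)+u/2, (t₁:ℚ)+u/2, (u:ℚ)/2, (t₃:ℚ)] := by
  rw [iota_decomp, Algebra.algebraMap_eq_smul_one]
  simp only [Matrix.cons_val_zero, Matrix.cons_val_one, Matrix.head_cons,
    Matrix.cons_val_two, Matrix.tail_cons, Matrix.cons_val_three, omegaC]
  rw [← Int.cast_smul_eq_zsmul ℚ s, ← Int.cast_smul_eq_zsmul ℚ t₀,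
    ← Int.cast_smul_eq_zsmul ℚ t₁, ← Int.cast_smul_eq_zsmul ℚ u,
    ← Int.cast_smul_eq_zsmul ℚ t₃]
  module

lemma one_mem_Qlat : (1 : CliffordAlgebra Q4) ∈ Qlat :=
  Submodule.subset_span ⟨∅, by simp⟩

lemma xgen_mem_Qlat (j : Fin 4) : xgen j ∈ Qlat :=
  Submodule.subset_span ⟨{j}, by simp⟩

lemma mem_lemma (s t₀ t₁ u t₃ : ℤ) :
    (s • (1:CliffordAlgebra Q4) + t₀ • gen 0 + t₁ • gen 1 + u • omegaC + t₃ • gen 3) ∈ Qlat := by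
  have h0 : gen 0 ∈ Qlat := by simpa [xgen] using xgen_mem_Qlat 0
  have h1 : gen 1 ∈ Qlat := by simpa [xgen] using xgen_mem_Qlat 1
  have h2 : omegaC ∈ Qlat := by simpa [xgen] using xgen_mem_Qlat 2
  have h3 : gen 3 ∈ Qlat := by simpa [xgen] using xgen_mem_Qlat 3
  exact Submodule.add_mem _ (Submodule.add_mem _ (Submodule.add_mem _ (Submodule.add_mem _
    (Submodule.smul_mem _ _ one_mem_Qlat) (Submodule.smul_mem _ _ h0))
    (Submodule.smul_mem _ _ h1)) (Submodule.smul_mem _ _ h2)) (Submodule.smul_mem _ _ h3)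

lemma master (l a s t₀ t₁ u t₃ : ℤ) (h1 : 2*s - u = 2 - l)
    (h2 : (2*t₀+u)^2 + (2*t₁+u)^2 + u^2 + (2*t₃)^2 + (2-l)^2 + 4*a = 0) :
    ∃ α ∈ Qlat,
      (∃ (a₀ : ℚ) (w : Fin 4 → ℚ),
        α = algebraMap ℚ (CliffordAlgebra Q4) a₀ + ι Q4 w) ∧
      α * α - algebraMap ℚ (CliffordAlgebra Q4) ((2 - l : ℤ) : ℚ) * α -
        algebraMap ℚ (CliffordAlgebra Q4) ((a : ℚ)) = 0 := by
  set c : ℚ := (s:ℚ) - u/2 with hc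
  set w : Fin 4 → ℚ := ![(t₀:ℚ)+u/2, (t₁:ℚ)+u/2, (u:ℚ)/2, (t₃:ℚ)] with hw
  have h1' : 2*(s:ℚ) - u = 2 - l := by exact_mod_cast h1
  have h2' : (2*(t₀:ℚ)+u)^2 + (2*(t₁:ℚ)+u)^2 + (u:ℚ)^2 + (2*(t₃:ℚ))^2
      + (2-(l:ℚ))^2 + 4*(a:ℚ) = 0 := by exact_mod_cast h2
  refine ⟨s • (1:CliffordAlgebra Q4) + t₀ • gen 0 + t₁ • gen 1 + u • omegaC + t₃ • gen 3,
    mem_lemma s t₀ t₁ u t₃, ⟨c, w, alpha_form s t₀ t₁ u t₃⟩, ?_⟩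
  rw [alpha_form s t₀ t₁ u t₃]
  have hq := quad c w
  have e1 : 2*c = ((2 - l : ℤ) : ℚ) := by push_cast; rw [hc]; linarith
  have e2 : Q4 w - c^2 = (a:ℚ) := by
    rw [Q4_apply, hw, hc]
    simp only [Matrix.cons_val_zero, Matrix.cons_val_one, Matrix.head_cons,
      Matrix.cons_val_two, Matrix.tail_cons, Matrix.cons_val_three]
    linear_combination (-1/4 : ℚ) * h2' - (1/4 : ℚ) * (2*(s:ℚ) - u + 2 - l) * h1'
  rw [e1, e2] at hq
  exact hq


/-- Let `l, a` be integers with `Δ = (2-l)² + 4a < 0`. Then there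
is a vector `α` in the order `𝒬 ⊂ C₄(ℚ)` satisfying `α² - (2-l)·α - a = 0`. -/
theorem stmt_15 (l a : ℤ) (hΔ : (2 - l) ^ 2 + 4 * a < 0) :
    ∃ α ∈ Qlat,
      (∃ (a₀ : ℚ) (w : Fin 4 → ℚ),
        α = algebraMap ℚ (CliffordAlgebra Q4) a₀ + ι Q4 w) ∧
      α * α - algebraMap ℚ (CliffordAlgebra Q4) ((2 - l : ℤ) : ℚ) * α -
        algebraMap ℚ (CliffordAlgebra Q4) ((a : ℚ)) = 0 := by
  rcases Int.even_or_odd l with ⟨m, hm⟩ | ⟨m, hm⟩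
  · -- l even: l = 2m, -Δ = 4N with N = -((1-m)² + a)
    subst hm
    set N : ℤ := -((1-m)^2 + a) with hN
    have hNpos : 0 < N := by nlinarith
    obtain ⟨p0, p1, p2, p3, hs⟩ := Nat.sum_four_squares N.toNat
    have hsum : (p0:ℤ)^2 + (p1:ℤ)^2 + (p2:ℤ)^2 + (p3:ℤ)^2 = N := by
      have := congrArg (Nat.cast : ℕ → ℤ) hs
      push_cast at this
      rwa [Int.toNat_of_nonneg hNpos.le] at this
    refine master (m+m) a (1 - m + p2) ((p0:ℤ) - p2) ((p1:ℤ) - p2) (2*p2) p3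
      (by ring) ?_
    have : N = -((1-m)^2 + a) := hN
    linear_combination 4 * hsum + 4 * this
  · -- l odd: l = 2m+1, n = -Δ ≡ 3 mod 4
    subst hm
    set n : ℤ := -((2 - (2*m+1))^2 + 4*a) with hn
    have hnpos : 0 < n := by omega
    have hn3 : n % 4 = 3 := by
      obtain ⟨M, hM⟩ : ∃ M, n = 4*M + 3 := ⟨-(m^2 - m + a) - 1, by rw [hn]; ring⟩
      omega
    obtain ⟨r₁, r₂, r₃, d, hsum⟩ := four_sq_three_odd n hnpos hn3
    refine master (2*m+1) a (1 - m + r₃) (r₁ - r₃) (r₂ - r₃) (2*r₃+1) d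
      (by ring) ?_
    have : n = -((2 - (2*m+1))^2 + 4*a) := hn
    linear_combination hsum + this
end

section
/- Let m ≥ 1 and let λ be a Salem number of degree 2m with minimal polynomial F and discriminant d_λ. Then d_λ ≡ (-1)^m · F(1)·F(-1) modulo squares of nonzero rationals, i.e. d_λ · (-1)^m · F(1)·F(-1) is a square in ℚ. -/
open Polynomial

/-- The product `∏_{β ≠ δ} (β - δ)` over ordered pairs of distinct entries of a
list (for a separable polynomial, over its list of complex roots). -/
noncomputable def pairProd (l : List ℂ) : ℂ :=
  ∏ i : Fin l.length, ∏ j : Fin l.length,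
    if i = j then 1 else (l.get i - l.get j)

/-- The discriminant `(-1)^{n(n-1)/2} ∏_{β ≠ δ} (β - δ)` of a rational
polynomial of degree `n`, computed from its complex roots. -/
noncomputable def polyDisc (F : Polynomial ℚ) : ℂ :=
  (-1) ^ (F.natDegree * (F.natDegree - 1) / 2) * pairProd (F.aroots ℂ).toList

/-
Write `μ = λ + λ⁻¹` and `G` for its minimal polynomial. The embedding `λ ↦ λ⁻¹` of `ℚ(λ)` fixes
`μ` but not `λ`, so `[ℚ(λ) : ℚ(μ)] = 2`, `deg G = m` and `F = X^m G(X + X⁻¹)`. Hence the roots of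
`F` come in pairs `{β, β⁻¹}`, with `α = β + β⁻¹` running over the roots of `G`. Within a pair the
two differences multiply to `-(β - β⁻¹)² = (2 - α)(2 + α)`, and between the pairs of `α` and `α'`
the four differences multiply to `(α - α')²`. So `∏_{x ≠ y} (x - y) = F(1) F(-1) D²`, where
`D = ∏_{α ≠ α'} (α - α')` is the resultant of `G` and `G'`, a rational number. As the sign in
`d_λ` is `(-1)^(m(2m-1)) = (-1)^m`, we get `d_λ (-1)^m F(1) F(-1) = (F(1) F(-1) D)²`.
-/

open Finset IntermediateField

section DiffProd

variable {K : Type*} [Field K] [DecidableEq K]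

def diffProd (s : Finset K) : K := ∏ x ∈ s, ∏ y ∈ s.erase x, (x - y)

lemma pairProd_toList_eq_diffProd {s : Multiset ℂ} (hs : s.Nodup) :
    pairProd s.toList = diffProd s.toFinset := by
  have hinj : Function.Injective s.toList.get :=
    List.nodup_iff_injective_get.mp (by rwa [← Multiset.coe_nodup, Multiset.coe_toList])
  have himage : univ.image s.toList.get = s.toFinset := by
    ext x
    simp [List.mem_iff_get, ← Multiset.mem_toList]
  rw [← himage, diffProd, prod_image hinj.injOn]
  refine prod_congr rfl fun i _ => ?_
  rw [← image_erase hinj, prod_image hinj.injOn, ← filter_ne' univ i, prod_filter]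
  exact prod_congr rfl fun j _ => by simp [eq_comm, ite_not]

lemma diffProd_biUnion {ι : Type*} [DecidableEq ι] {t : Finset ι} {f : ι → Finset K}
    (h : (t : Set ι).PairwiseDisjoint f) :
    diffProd (t.biUnion f) =
      ∏ i ∈ t, (diffProd (f i) * ∏ j ∈ t.erase i, ∏ x ∈ f i, ∏ y ∈ f j, (x - y)) := by
  have herase : ∀ i ∈ t, ∀ x ∈ f i,
      (t.biUnion f).erase x = (f i).erase x ∪ (t.erase i).biUnion f := by
    intro i hi x hx
    ext y
    simp only [mem_erase, mem_union, mem_biUnion]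
    constructor
    · rintro ⟨hyx, j, hj, hy⟩
      by_cases hji : j = i
      · exact .inl ⟨hyx, hji ▸ hy⟩
      · exact .inr ⟨j, ⟨hji, hj⟩, hy⟩
    · rintro (⟨hyx, hy⟩ | ⟨j, ⟨hji, hj⟩, hy⟩)
      · exact ⟨hyx, i, hi, hy⟩
      · exact ⟨fun hyx => hji (h.elim_finset hj hi y hy (hyx ▸ hx)), j, hj, hy⟩
  have hdisj : ∀ i ∈ t, ∀ x ∈ f i, Disjoint ((f i).erase x) ((t.erase i).biUnion f) := by
    intro i hi x hx
    refine (disjoint_biUnion_right _ _ _).mpr fun j hj => ?_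
    exact (h hi (mem_of_mem_erase hj) (ne_of_mem_erase hj).symm).mono_left (erase_subset _ _)
  rw [diffProd, prod_biUnion h]
  refine prod_congr rfl fun i hi => ?_
  rw [diffProd, ← prod_comm, ← prod_mul_distrib]
  refine prod_congr rfl fun x hx => ?_
  rw [herase i hi x hx, prod_union (hdisj i hi x hx), prod_biUnion ((h.subset (by simp)))]

lemma add_inv_eq_of_mem_pair_inv {β x : K} (hx : x ∈ ({β, β⁻¹} : Finset K)) :
    x + x⁻¹ = β + β⁻¹ := by
  rcases mem_insert.mp hx with rfl | hx
  · rfl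
  · rw [mem_singleton.mp hx, inv_inv, add_comm]

lemma disjoint_pair_inv {β γ : K} (h : β + β⁻¹ ≠ γ + γ⁻¹) :
    Disjoint ({β, β⁻¹} : Finset K) {γ, γ⁻¹} :=
  disjoint_left.mpr fun _ hβ hγ =>
    h ((add_inv_eq_of_mem_pair_inv hβ).symm.trans (add_inv_eq_of_mem_pair_inv hγ))

lemma diffProd_pair_inv {β : K} (h : β ≠ β⁻¹) :
    diffProd {β, β⁻¹} = (2 - (β + β⁻¹)) * (2 + (β + β⁻¹)) := by
  have hβ : β ≠ 0 := by rintro rfl; simp at h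
  rw [diffProd, prod_pair h, pair_comm, erase_insert (by simpa using h.symm), pair_comm,
    erase_insert (by simpa using h), prod_singleton, prod_singleton]
  field_simp
  ring

lemma prod_pair_inv_sub_pair_inv {β γ : K} (hβ : β ≠ β⁻¹) (hγ : γ ≠ γ⁻¹) :
    ∏ x ∈ {β, β⁻¹}, ∏ y ∈ {γ, γ⁻¹}, (x - y) = (β + β⁻¹ - (γ + γ⁻¹)) ^ 2 := by
  have hβ0 : β ≠ 0 := by rintro rfl; simp at hβ
  have hγ0 : γ ≠ 0 := by rintro rfl; simp at hγ
  rw [prod_pair hβ, prod_pair hγ, prod_pair hγ]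
  field_simp
  ring

lemma diffProd_biUnion_pair_inv {t : Finset K} {b : K → K}
    (hb : ∀ α ∈ t, b α + (b α)⁻¹ = α) (hne : ∀ α ∈ t, b α ≠ (b α)⁻¹) :
    diffProd (t.biUnion fun α => {b α, (b α)⁻¹}) =
      (∏ α ∈ t, (2 - α) * (2 + α)) * diffProd t ^ 2 := by
  have hdisj : (t : Set K).PairwiseDisjoint fun α => ({b α, (b α)⁻¹} : Finset K) :=
    fun α hα α' hα' hne' => disjoint_pair_inv (by rwa [hb α hα, hb α' hα'])
  rw [diffProd_biUnion hdisj, diffProd, ← prod_pow, ← prod_mul_distrib]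
  refine prod_congr rfl fun α hα => ?_
  rw [diffProd_pair_inv (hne α hα), hb α hα, ← prod_pow]
  congr 1
  refine prod_congr rfl fun α' hα' => ?_
  rw [prod_pair_inv_sub_pair_inv (hne α hα) (hne α' (mem_of_mem_erase hα')), hb α hα,
    hb α' (mem_of_mem_erase hα')]

lemma diffProd_roots_of_eq_prod_pair_inv {s : Multiset K} (hs : s.Nodup) {b : K → K}
    (hb : ∀ α ∈ s, b α + (b α)⁻¹ = α) {P : K[X]}
    (hP : P = (s.map fun α => (X - C (b α)) * (X - C (b α)⁻¹)).prod) (hnodup : P.roots.Nodup) :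
    diffProd P.roots.toFinset = P.eval 1 * P.eval (-1) * diffProd s.toFinset ^ 2 := by
  have hroots : P.roots = s.bind fun α => {b α, (b α)⁻¹} := by
    rw [hP, ← roots_multiset_prod_X_sub_C (s.bind _), Multiset.map_bind, Multiset.prod_bind]
    simp
  have hne : ∀ α ∈ s, b α ≠ (b α)⁻¹ := fun α hα => by
    rw [hroots, Multiset.nodup_bind] at hnodup
    simpa using hnodup.1 α hα
  have heval : ∀ z, P.eval z = ∏ α ∈ s.toFinset, (z - b α) * (z - (b α)⁻¹) := fun z => by
    rw [hP, eval_multiset_prod, ← Multiset.toFinset_eq hs]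
    simp [Finset.prod]
  have hpair : ∀ α ∈ s, ((1 : K) - b α) * (1 - (b α)⁻¹) * ((-1 - b α) * (-1 - (b α)⁻¹)) =
      (2 - α) * (2 + α) := fun α hα => by
    have hb0 : b α ≠ 0 := fun h => hne α hα (by simp [h])
    calc _ = (2 - (b α + (b α)⁻¹)) * (2 + (b α + (b α)⁻¹)) := by field_simp; ring
      _ = _ := by rw [hb α hα]
  rw [hroots, bind_toFinset]
  simp only [Multiset.insert_eq_cons, Multiset.toFinset_cons, Multiset.toFinset_singleton]
  rw [diffProd_biUnion_pair_inv (fun α hα => hb α (Multiset.mem_toFinset.mp hα))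
    (fun α hα => hne α (Multiset.mem_toFinset.mp hα)), heval, heval, ← prod_mul_distrib]
  congr 1
  exact prod_congr rfl fun α hα => (hpair α (Multiset.mem_toFinset.mp hα)).symm

lemma diffProd_aroots_eq_algebraMap_resultant {F : Type*} [Field F] [Algebra F K] {p : F[X]}
    (hp : p.Monic) (hsep : p.Separable) (hs : (p.map (algebraMap F K)).Splits) :
    diffProd (p.aroots K).toFinset = algebraMap F K (resultant p (derivative p)) := by
  set P := p.map (algebraMap F K)
  have hres : algebraMap F K (resultant p (derivative p)) =
      resultant P (derivative P) P.natDegree (derivative P).natDegree := by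
    rw [derivative_map, natDegree_map, natDegree_map, resultant_map_map]
  rw [hres, resultant_eq_prod_eval _ _ _ le_rfl hs, (hp.map _).leadingCoeff, one_pow, one_mul,
    diffProd, aroots_def, ← Multiset.toFinset_eq (nodup_roots hsep.map)]
  exact congrArg Multiset.prod <| Multiset.map_congr rfl fun x hx =>
    (hs.eval_root_derivative (hp.map _) hx).symm

end DiffProd

section ReciprocalLift

variable {R : Type*} [CommRing R]

/-- `X ^ m * G (X + X⁻¹)`, a polynomial as soon as `G.natDegree ≤ m`. -/
noncomputable def reciprocalLift (m : ℕ) (G : R[X]) : R[X] :=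
  ∑ i ∈ range (m + 1), C (G.coeff i) * (X ^ 2 + 1) ^ i * X ^ (m - i)

lemma map_reciprocalLift {S : Type*} [CommRing S] (f : R →+* S) (m : ℕ) (G : R[X]) :
    (reciprocalLift m G).map f = reciprocalLift m (G.map f) := by
  simp [reciprocalLift, Polynomial.map_sum]

variable {K : Type*} [Field K]

lemma eval_reciprocalLift {m : ℕ} {G : K[X]} (hG : G.natDegree ≤ m) {z : K} (hz : z ≠ 0) :
    (reciprocalLift m G).eval z = z ^ m * G.eval (z + z⁻¹) := by
  rw [eval_eq_sum_range' (Nat.lt_succ_of_le hG), mul_sum, reciprocalLift, eval_finsetSum]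
  refine sum_congr rfl fun i hi => ?_
  have hzm : z ^ m = z ^ (m - i) * z ^ i := by
    rw [← pow_add, Nat.sub_add_cancel (Nat.lt_succ_iff.mp (mem_range.mp hi))]
  have hz2 : z ^ 2 + 1 = z * (z + z⁻¹) := by field_simp
  simp only [eval_mul, eval_C, eval_pow, eval_add, eval_X, eval_one, hzm, hz2, mul_pow]
  ring

lemma reciprocalLift_multiset_prod [Infinite K] {s : Multiset K} {b : K → K}
    (hb0 : ∀ α ∈ s, b α ≠ 0) (hb : ∀ α ∈ s, b α + (b α)⁻¹ = α) :
    reciprocalLift (Multiset.card s) (s.map fun α => X - C α).prod =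
      (s.map fun α => (X - C (b α)) * (X - C (b α)⁻¹)).prod := by
  refine eq_of_infinite_eval_eq _ _ ((Set.finite_singleton 0).infinite_compl.mono fun z hz => ?_)
  have hz : z ≠ 0 := hz
  rw [Set.mem_ofPred_eq, eval_reciprocalLift (natDegree_multiset_prod_X_sub_C_eq_card s).le hz,
    eval_multiset_prod, eval_multiset_prod, Multiset.map_map, Multiset.map_map,
    ← Multiset.prod_replicate, ← Multiset.map_const', ← Multiset.prod_map_mul]
  refine congrArg Multiset.prod <| Multiset.map_congr rfl fun α hα => ?_
  obtain ⟨β, hβ⟩ : ∃ β, b α = β := ⟨_, rfl⟩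
  have hβ0 : β ≠ 0 := hβ ▸ hb0 α hα
  have hαβ : β + β⁻¹ = α := hβ ▸ hb α hα
  subst hαβ
  simp only [Function.comp_apply, eval_mul, eval_sub, eval_X, eval_C, hβ]
  field_simp
  ring

lemma map_minpoly_eq_prod_pair_inv {L Ω : Type*} [Field L] [Algebra K L] [Field Ω] [IsAlgClosed Ω]
    [Algebra K Ω] {x : L} (hx : IsIntegral K x) (hx0 : x ≠ 0)
    (hdeg : (minpoly K x).natDegree = 2 * (minpoly K (x + x⁻¹)).natDegree)
    {b : Ω → Ω} (hb0 : ∀ α, b α ≠ 0) (hb : ∀ α, b α + (b α)⁻¹ = α) :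
    (minpoly K x).map (algebraMap K Ω) =
      (((minpoly K (x + x⁻¹)).aroots Ω).map fun α => (X - C (b α)) * (X - C (b α)⁻¹)).prod := by
  set G := minpoly K (x + x⁻¹)
  have hGint : IsIntegral K (x + x⁻¹) := by
    by_contra h
    rw [show G = 0 from minpoly.eq_zero h, natDegree_zero] at hdeg
    exact (minpoly.natDegree_pos hx).ne' hdeg
  have hG : G.map (algebraMap K Ω) = ((G.aroots Ω).map fun α => X - C α).prod :=
    (IsAlgClosed.splits _).eq_prod_roots_of_monic ((minpoly.monic hGint).map _)
  have hcard : Multiset.card (G.aroots Ω) = G.natDegree := by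
    rw [← (IsAlgClosed.splits _).natDegree_eq_card_roots, natDegree_map]
  have hlift : (reciprocalLift G.natDegree G).map (algebraMap K Ω) =
      ((G.aroots Ω).map fun α => (X - C (b α)) * (X - C (b α)⁻¹)).prod := by
    rw [map_reciprocalLift, hG, ← hcard,
      reciprocalLift_multiset_prod (fun α _ => hb0 α) (fun α _ => hb α)]
  have hdvd : minpoly K x ∣ reciprocalLift G.natDegree G := by
    refine minpoly.dvd K x ?_
    rw [aeval_def, eval₂_eq_eval_map, map_reciprocalLift,
      eval_reciprocalLift natDegree_map_le hx0, ← eval₂_eq_eval_map, ← aeval_def, minpoly.aeval,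
      mul_zero]
  refine (eq_of_monic_of_dvd_of_natDegree_le ((minpoly.monic hx).map _)
    (monic_multiset_prod_of_monic _ _ fun α _ => (monic_X_sub_C _).mul (monic_X_sub_C _))
    (hlift ▸ Polynomial.map_dvd _ hdvd) ?_).symm
  rw [natDegree_map, hdeg, ← hcard]
  refine (natDegree_multiset_prod_le _).trans ?_
  refine (Multiset.sum_le_card_nsmul _ 2 ?_).trans (by simp [mul_comm])
  simp only [Multiset.map_map, Function.comp_apply, Multiset.mem_map]
  rintro _ ⟨α, -, rfl⟩
  rw [(monic_X_sub_C _).natDegree_mul (monic_X_sub_C _), natDegree_X_sub_C, natDegree_X_sub_C]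

end ReciprocalLift

lemma exists_ne_zero_add_inv_eq {K : Type*} [Field K] [IsAlgClosed K] (α : K) :
    ∃ β : K, β ≠ 0 ∧ β + β⁻¹ = α := by
  have hdeg : (X ^ 2 - C α * X + 1 : K[X]).degree = 2 := by compute_degree!
  obtain ⟨β, hβ⟩ := IsAlgClosed.exists_root _ (hdeg ▸ two_ne_zero)
  have hβ' : β ^ 2 - α * β + 1 = 0 := by simpa using hβ
  have hβ0 : β ≠ 0 := by rintro rfl; simp at hβ'
  exact ⟨β, hβ0, by field_simp; linear_combination hβ'⟩

section Tower

variable {K L : Type*} [Field K] [Field L] [Algebra K L]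

lemma natDegree_minpoly_eq_mul_of_mem_adjoin {x y : L} (hx : IsIntegral K x) (hy : y ∈ K⟮x⟯) :
    (minpoly K x).natDegree = (minpoly K⟮y⟯ x).natDegree * (minpoly K y).natDegree := by
  have : FiniteDimensional K K⟮x⟯ := adjoin.finiteDimensional hx
  have hyint : IsIntegral K y := isIntegral_iff.mp (IsIntegral.of_finite K (⟨y, hy⟩ : K⟮x⟯))
  have htower : (K⟮y⟯⟮x⟯).restrictScalars K = K⟮x⟯ := by
    rw [restrictScalars_adjoin_eq_sup, sup_eq_right, adjoin_simple_le_iff]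
    exact hy
  rw [← adjoin.finrank hx, ← adjoin.finrank hx.tower_top, ← adjoin.finrank hyint, mul_comm,
    Module.finrank_mul_finrank K K⟮y⟯ K⟮y⟯⟮x⟯, ← htower]
  rfl

lemma natDegree_minpoly_eq_two_of_add_inv_mem {M : IntermediateField K L} {x : L} (hx : x ∉ M)
    (hμ : x + x⁻¹ ∈ M) : (minpoly M x).natDegree = 2 := by
  have hx0 : x ≠ 0 := by rintro rfl; exact hx M.zero_mem
  set p : M[X] := X ^ 2 - C ⟨x + x⁻¹, hμ⟩ * X + 1
  have hpdeg : p.natDegree = 2 := by simp only [p]; compute_degree!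
  have hpmonic : p.Monic := by simp only [p]; monicity!
  have hp : aeval x p = 0 := by
    simp only [p, map_add, map_sub, map_mul, map_pow, aeval_X, aeval_C, map_one]
    rw [IntermediateField.algebraMap_apply]
    field_simp
    ring
  have hint : IsIntegral M x := ⟨p, hpmonic, hp⟩
  refine le_antisymm ?_ ((minpoly.two_le_natDegree_iff hint).mpr fun ⟨y, hy⟩ => hx (hy ▸ y.2))
  exact hpdeg ▸ natDegree_le_of_dvd (minpoly.dvd M x hp) hpmonic.ne_zero

lemma not_mem_adjoin_add_inv {x : L} (hx : IsIntegral K x) (hinv : aeval x⁻¹ (minpoly K x) = 0)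
    (hne : x⁻¹ ≠ x) : x ∉ K⟮x + x⁻¹⟯ := by
  intro hmem
  obtain ⟨r, s, hrs⟩ := (mem_adjoin_simple_iff K x).mp hmem
  set σ : K⟮x⟯ →ₐ[K] L := (algHomAdjoinIntegralEquiv K hx).symm
    ⟨x⁻¹, mem_aroots.mpr ⟨minpoly.ne_zero hx, hinv⟩⟩
  have hσ : σ (AdjoinSimple.gen K x) = x⁻¹ := algHomAdjoinIntegralEquiv_symm_apply_gen K hx _
  set g := AdjoinSimple.gen K x
  have hg : g = aeval (g + g⁻¹) r / aeval (g + g⁻¹) s := by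
    apply (algebraMap K⟮x⟯ L).injective
    rwa [map_div₀, ← aeval_algebraMap_apply, ← aeval_algebraMap_apply, map_add, map_inv₀,
      AdjoinSimple.algebraMap_gen]
  apply hne
  calc x⁻¹ = σ g := hσ.symm
    _ = aeval (σ g + (σ g)⁻¹) r / aeval (σ g + (σ g)⁻¹) s := by
      conv_lhs => rw [hg]
      simp only [map_div₀, ← aeval_algHom_apply, map_add, map_inv₀]
    _ = x := by rw [hσ, inv_inv, add_comm, ← hrs]

lemma natDegree_minpoly_eq_two_mul {x : L} (hx : IsIntegral K x)
    (hinv : aeval x⁻¹ (minpoly K x) = 0) (hne : x⁻¹ ≠ x) :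
    (minpoly K x).natDegree = 2 * (minpoly K (x + x⁻¹)).natDegree := by
  have hgen : x ∈ K⟮x⟯ := mem_adjoin_simple_self K x
  rw [natDegree_minpoly_eq_mul_of_mem_adjoin hx (add_mem hgen (inv_mem hgen)),
    natDegree_minpoly_eq_two_of_add_inv_mem (not_mem_adjoin_add_inv hx hinv hne)
      (mem_adjoin_simple_self K _)]

end Tower

lemma diffProd_aroots_minpoly_eq {K L Ω : Type*} [Field K] [CharZero K] [Field L]
    [Algebra K L] [Field Ω] [IsAlgClosed Ω] [Algebra K Ω] [DecidableEq Ω] {x : L}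
    (hx : IsIntegral K x) (hinv : aeval x⁻¹ (minpoly K x) = 0) (hne : x⁻¹ ≠ x) :
    diffProd ((minpoly K x).aroots Ω).toFinset =
      algebraMap K Ω ((minpoly K x).eval 1 * (minpoly K x).eval (-1) *
        resultant (minpoly K (x + x⁻¹)) (derivative (minpoly K (x + x⁻¹))) ^ 2) := by
  set G := minpoly K (x + x⁻¹)
  have hGint : IsIntegral K (x + x⁻¹) := hx.add ⟨_, minpoly.monic hx, hinv⟩
  have hsepG : G.Separable := (minpoly.irreducible hGint).separable
  have hx0 : x ≠ 0 := by rintro rfl; exact hne inv_zero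
  choose b hb0 hb using exists_ne_zero_add_inv_eq (K := Ω)
  rw [aroots_def, diffProd_roots_of_eq_prod_pair_inv (nodup_roots hsepG.map) (fun α _ => hb α)
      (map_minpoly_eq_prod_pair_inv hx hx0 (natDegree_minpoly_eq_two_mul hx hinv hne) hb0 hb)
      (nodup_roots (minpoly.irreducible hx).separable.map),
    ← aroots_def, diffProd_aroots_eq_algebraMap_resultant (minpoly.monic hGint) hsepG
      (IsAlgClosed.splits _)]
  have heval := eval_intCast_map (algebraMap K Ω) (minpoly K x) (-1)
  push_cast at heval
  rw [eval_one_map, heval, map_mul, map_mul, map_pow]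

lemma neg_one_pow_two_mul_mul_sub_one_div_two {R : Type*} [Monoid R] [HasDistribNeg R] (m : ℕ) :
    (-1 : R) ^ (2 * m * (2 * m - 1) / 2) = (-1) ^ m := by
  rw [mul_assoc, Nat.mul_div_cancel_left _ two_pos]
  rcases m with _ | k
  · rfl
  · rw [show (k + 1) * (2 * (k + 1) - 1) = (k + 1) + 2 * ((k + 1) * k) by
      rw [show 2 * (k + 1) - 1 = 2 * k + 1 by omega]; ring, pow_add, pow_mul, neg_one_sq, one_pow,
      mul_one]

theorem stmt_17_general (m : ℕ) (lam : ℝ) (F : Polynomial ℚ)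
    (hF : F = minpoly ℚ lam)
    (hlam : 1 < lam) (hint : IsIntegral ℤ lam)
    (hdeg : F.natDegree = 2 * m)
    (hinv : Polynomial.aeval lam⁻¹ F = 0) :
    ∃ q : ℚ, q ≠ 0 ∧
      polyDisc F * (((-1) ^ m * F.eval 1 * F.eval (-1) : ℚ) : ℂ) = (q : ℂ) ^ 2 := by
  subst hF
  set F := minpoly ℚ lam
  set D := resultant (minpoly ℚ (lam + lam⁻¹)) (derivative (minpoly ℚ (lam + lam⁻¹)))
  have hint : IsIntegral ℚ lam := hint.tower_top
  have hne : lam⁻¹ ≠ lam := ((inv_lt_one_of_one_lt₀ hlam).trans hlam).ne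
  have hD : D ≠ 0 := resultant_ne_zero _ _
    (minpoly.irreducible (hint.add ⟨_, minpoly.monic hint, hinv⟩)).separable
  have hroot (r : ℚ) : F.eval r ≠ 0 :=
    (minpoly.irreducible hint).not_isRoot_of_natDegree_ne_one (by rw [hdeg]; omega)
  refine ⟨F.eval 1 * F.eval (-1) * D, mul_ne_zero (mul_ne_zero (hroot 1) (hroot (-1))) hD, ?_⟩
  rw [polyDisc, hdeg, neg_one_pow_two_mul_mul_sub_one_div_two,
    pairProd_toList_eq_diffProd (nodup_roots (minpoly.irreducible hint).separable.map),
    diffProd_aroots_minpoly_eq hint hinv hne, eq_ratCast]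
  have hsign : (-1 : ℚ) ^ m * (-1) ^ m = 1 := by rw [← mul_pow]; norm_num
  have key : (-1) ^ m * (F.eval 1 * F.eval (-1) * D ^ 2) * ((-1) ^ m * F.eval 1 * F.eval (-1)) =
      (F.eval 1 * F.eval (-1) * D) ^ 2 := by
    linear_combination (F.eval 1 * F.eval (-1) * D) ^ 2 * hsign
  exact_mod_cast key

/-- Let `m ≥ 1` and let `λ` be a Salem number of degree `2m` with
minimal polynomial `F` and discriminant `d_λ`. Then
`d_λ ≡ (-1)^m·F(1)·F(-1)` modulo nonzero rational squares:
`d_λ · (-1)^m·F(1)·F(-1)` is the square of a nonzero rational. -/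
theorem stmt_17 (m : ℕ) (hm : 1 ≤ m) (lam : ℝ) (F : Polynomial ℚ)
    (hF : F = minpoly ℚ lam)
    (hlam : 1 < lam) (hint : IsIntegral ℤ lam)
    (hdeg : F.natDegree = 2 * m)
    (hinv : Polynomial.aeval lam⁻¹ F = 0)
    (hconj : ∀ z : ℂ, Polynomial.aeval z F = 0 →
      z = (lam : ℂ) ∨ z = ((lam⁻¹ : ℝ) : ℂ) ∨ ‖z‖ = 1) :
    ∃ q : ℚ, q ≠ 0 ∧
      polyDisc F * (((-1) ^ m * F.eval 1 * F.eval (-1) : ℚ) : ℂ) = (q : ℂ) ^ 2 :=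
  stmt_17_general m lam F hF hlam hint hdeg hinv
end
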